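/- arXiv:1908.03551 — 2 statements merged into one kernel-verified Lean document; each statement's English description precedes it below -/
import Mathlib

section
/- The Brzozowski reordering derivative decides membership in the trace closure: for every regular expression E over Σ and all words u, v, u++v ∈ [⟦E⟧] if and only if v ∈ [⟦D_u E⟧]; in particular, u ∈ [⟦E⟧] if and only if (D_u E)↓. -/
open RegularExpression
open scoped Classical

universe u

variable {α : Type u}

/-- Two words are independent if every letter of the first is independent
of every letter of the second. -/
def WIndep (I : α → α → Prop) (u v : List α) : Prop :=
  ∀ a ∈ u, ∀ b ∈ v, I a b

/-- Trace equivalence: the least equivalence relation on words containing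
all pairs (x ++ [a,b] ++ y, x ++ [b,a] ++ y) with a I b. -/
inductive TrEq (I : α → α → Prop) : List α → List α → Prop
  | swap (x y : List α) {a b : α} : I a b → TrEq I (x ++ [a, b] ++ y) (x ++ [b, a] ++ y)
  | refl (u : List α) : TrEq I u u
  | symm {u v : List α} : TrEq I u v → TrEq I v u
  | trans {u v w : List α} : TrEq I u v → TrEq I v w → TrEq I u w

/-- Trace closure of a language. -/
def TrClosure (I : α → α → Prop) (L : Set (List α)) : Set (List α) :=
  {w | ∃ z ∈ L, TrEq I w z}

/-- u ⊲ z ⊳ v with exactly n blocks of u: there are nonempty words u₁,…,uₙ and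
words v₀,…,vₙ (with v₁,…,v_{n-1} nonempty) such that u = u₁⋯uₙ, v = v₀⋯vₙ,
z = v₀u₁v₁⋯uₙvₙ and vⱼ I uᵢ whenever j < i. -/
def ScatN (I : α → α → Prop) (n : ℕ) (u z v : List α) : Prop :=
  ∃ us vs : ℕ → List α,
    (∀ i, 1 ≤ i → i ≤ n → us i ≠ []) ∧
    (∀ j, 1 ≤ j → j ≤ n - 1 → vs j ≠ []) ∧
    u = ((List.range n).map (fun i => us (i + 1))).flatten ∧
    v = ((List.range (n + 1)).map vs).flatten ∧
    z = vs 0 ++ ((List.range n).map (fun i => us (i + 1) ++ vs (i + 1))).flatten ∧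
    (∀ i j, 1 ≤ i → i ≤ n → j < i → WIndep I (vs j) (us i))

/-- u ⊲ z ⊳ v -/
def Scat (I : α → α → Prop) (u z v : List α) : Prop :=
  ∃ n, ScatN I n u z v

/-- u ∼⊲ z ⊳ v -/
def EqScat (I : α → α → Prop) (u z v : List α) : Prop :=
  ∃ u', TrEq I u u' ∧ Scat I u' z v

/-- u ∼⊲ z ⊳∼ v -/
def EqScatEq (I : α → α → Prop) (u z v : List α) : Prop :=
  ∃ u' v', TrEq I u u' ∧ Scat I u' z v' ∧ TrEq I v' v

/-- u ∼⊲_N z ⊳∼ v : as EqScatEq, with the number of blocks bounded by N -/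
def EqScatEqLe (I : α → α → Prop) (N : ℕ) (u z v : List α) : Prop :=
  ∃ u' v', TrEq I u u' ∧ (∃ n ≤ N, ScatN I n u' z v') ∧ TrEq I v' v

/-- Reordering concatenation of words. -/
def rconc (I : α → α → Prop) : List α → List α → Set (List α)
  | [], v => {v}
  | a :: u, [] => {a :: u}
  | a :: u, b :: v =>
      (List.cons a) '' rconc I u (b :: v) ∪
      {z | WIndep I (a :: u) [b] ∧ ∃ w ∈ rconc I (a :: u) v, z = b :: w}
termination_by u v => u.length + v.length

/-- Reordering concatenation lifted to languages. -/
def rconcL (I : α → α → Prop) (L L' : Set (List α)) : Set (List α) :=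
  {z | ∃ u ∈ L, ∃ v ∈ L', z ∈ rconc I u v}

/-- The reorderable part of a language w.r.t. a word. -/
def RPart (I : α → α → Prop) (u : List α) (L : Set (List α)) : Set (List α) :=
  {v ∈ L | WIndep I v u}

/-- The reordering derivative of a language along a word. -/
def RDeriv (I : α → α → Prop) (u : List α) (L : Set (List α)) : Set (List α) :=
  {v | ∃ z ∈ L, EqScat I u z v}

/-- Syntactic reorderable part of a regexp w.r.t. a letter. -/
noncomputable def Rexp (I : α → α → Prop) (a : α) : RegularExpression α → RegularExpression α
  | zero => zero
  | epsilon => epsilon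
  | char b => if I a b then char b else zero
  | plus E F => plus (Rexp I a E) (Rexp I a F)
  | comp E F => comp (Rexp I a E) (Rexp I a F)
  | RegularExpression.star E => star (Rexp I a E)

/-- Brzozowski reordering derivative of a regexp along a letter. -/
noncomputable def Dexp (I : α → α → Prop) (a : α) : RegularExpression α → RegularExpression α
  | zero => zero
  | epsilon => zero
  | char b => if a = b then epsilon else zero
  | plus E F => plus (Dexp I a E) (Dexp I a F)
  | comp E F => plus (comp (Dexp I a E) F) (comp (Rexp I a E) (Dexp I a F))
  | RegularExpression.star E => comp (star (Rexp I a E)) (comp (Dexp I a E) (star E))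

/-- Syntactic reorderable part along a word. -/
noncomputable def RexpW (I : α → α → Prop) (u : List α) (E : RegularExpression α) :
    RegularExpression α :=
  u.foldl (fun E a => Rexp I a E) E

/-- Brzozowski reordering derivative along a word. -/
noncomputable def DexpW (I : α → α → Prop) (u : List α) (E : RegularExpression α) :
    RegularExpression α :=
  u.foldl (fun E a => Dexp I a E) E

/-- Antimirov reordering parts-of-derivatives along a letter. -/
inductive Antim (I : α → α → Prop) : RegularExpression α → α → RegularExpression α → Prop
  | chr (a : α) : Antim I (char a) a epsilon
  | plusL {E F : RegularExpression α} {a E'} : Antim I E a E' → Antim I (plus E F) a E'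
  | plusR {E F : RegularExpression α} {a F'} : Antim I F a F' → Antim I (plus E F) a F'
  | compL {E F : RegularExpression α} {a E'} : Antim I E a E' → Antim I (comp E F) a (comp E' F)
  | compR {E F : RegularExpression α} {a F'} :
      Antim I F a F' → Antim I (comp E F) a (comp (Rexp I a E) F')
  | st {E : RegularExpression α} {a E'} :
      Antim I E a E' → Antim I (star E) a (comp (star (Rexp I a E)) (comp E' (star E)))

/-- Antimirov reordering parts-of-derivatives along a word. -/
inductive AntimW (I : α → α → Prop) : RegularExpression α → List α → RegularExpression α → Prop
  | nil (E : RegularExpression α) : AntimW I E [] E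
  | snoc {E : RegularExpression α} {u E' a E''} :
      AntimW I E u E' → Antim I E' a E'' → AntimW I E (u ++ [a]) E''

/-- The dependence graph of a word: vertices are positions; distinct positions
are adjacent when their letters are not independent. -/
def depGraph (I : α → α → Prop) (w : List α) : SimpleGraph (Fin w.length) where
  Adj i j := i ≠ j ∧ ¬(I (w.get i) (w.get j) ∧ I (w.get j) (w.get i))
  symm := by
    constructor
    intro i j h
    exact ⟨h.1.symm, fun hc => h.2 ⟨hc.2, hc.1⟩⟩
  loopless := by
    constructor
    intro i h
    exact h.1 rfl

/-- A word is connected if its dependence graph is connected. -/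
def WordConnected (I : α → α → Prop) (w : List α) : Prop :=
  (depGraph I w).Preconnected

/-- Least fixed point star for the trace-closing semantics. -/
def starI (I : α → α → Prop) (L : Set (List α)) : Set (List α) :=
  sInf {X | {([] : List α)} ∪ rconcL I L X ⊆ X}

/-- Trace-closing semantics of regular expressions. -/
def langI (I : α → α → Prop) : RegularExpression α → Set (List α)
  | zero => ∅
  | epsilon => {[]}
  | char a => {[a]}
  | plus E F => langI I E ∪ langI I F
  | comp E F => rconcL I (langI I E) (langI I F)
  | RegularExpression.star E => starI I (langI I E)

/-- L has (scattering) rank at most N. -/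
def HasRankLe (I : α → α → Prop) (L : Set (List α)) (N : ℕ) : Prop :=
  ∀ u v, u ++ v ∈ TrClosure I L → ∃ z ∈ L, EqScatEqLe I N u z v

/-- L has uniform (scattering) rank at most N. -/
def HasUniformRankLe (I : α → α → Prop) (L : Set (List α)) (N : ℕ) : Prop :=
  ∀ w ∈ TrClosure I L, ∃ z ∈ L, ∀ u v, w = u ++ v → EqScatEqLe I N u z v

/-- Star-connected regular expressions. -/
inductive StarConnected (I : α → α → Prop) : RegularExpression α → Prop
  | zero : StarConnected I zero
  | epsilon : StarConnected I epsilon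
  | chr (a : α) : StarConnected I (char a)
  | plus {E F : RegularExpression α} :
      StarConnected I E → StarConnected I F → StarConnected I (plus E F)
  | comp {E F : RegularExpression α} :
      StarConnected I E → StarConnected I F → StarConnected I (comp E F)
  | st {E : RegularExpression α} :
      StarConnected I E → (∀ w ∈ E.matches', WordConnected I w) → StarConnected I (star E)

/-- Refined Antimirov reordering parts-of-derivatives along a letter. -/
inductive RAntim (I : α → α → Prop) :
    RegularExpression α → α → RegularExpression α → RegularExpression α → Prop
  | chr (a : α) : RAntim I (char a) a epsilon epsilon
  | plusL {E F : RegularExpression α} {a El Er} :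
      RAntim I E a El Er → RAntim I (plus E F) a El Er
  | plusR {E F : RegularExpression α} {a Fl Fr} :
      RAntim I F a Fl Fr → RAntim I (plus E F) a Fl Fr
  | compL {E F : RegularExpression α} {a El Er} :
      RAntim I E a El Er → RAntim I (comp E F) a El (comp Er F)
  | compR {E F : RegularExpression α} {a Fl Fr} :
      RAntim I F a Fl Fr → RAntim I (comp E F) a (comp (Rexp I a E) Fl) Fr
  | st {E : RegularExpression α} {a El Er} :
      RAntim I E a El Er →
      RAntim I (star E) a (comp (star (Rexp I a E)) El) (comp Er (star E))

/-- Refined Antimirov relation lifted to nonempty lists of regexps (unbounded). -/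
inductive RAntimL (I : α → α → Prop) :
    List (RegularExpression α) → α → List (RegularExpression α) → Prop
  | split {Γ Δ : List (RegularExpression α)} {E : RegularExpression α} {a El Er} :
      RAntim I E a El Er →
      RAntimL I (Γ ++ E :: Δ) a (Γ.map (Rexp I a) ++ El :: Er :: Δ)
  | dropL {Γ Δ : List (RegularExpression α)} {E : RegularExpression α} {a El Er} :
      RAntim I E a El Er → [] ∈ El.matches' → Γ ≠ [] →
      RAntimL I (Γ ++ E :: Δ) a (Γ.map (Rexp I a) ++ Er :: Δ)
  | dropR {Γ Δ : List (RegularExpression α)} {E : RegularExpression α} {a El Er} :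
      RAntim I E a El Er → [] ∈ Er.matches' → Δ ≠ [] →
      RAntimL I (Γ ++ E :: Δ) a (Γ.map (Rexp I a) ++ El :: Δ)
  | dropBoth {Γ Δ : List (RegularExpression α)} {E : RegularExpression α} {a El Er} :
      RAntim I E a El Er → [] ∈ El.matches' → [] ∈ Er.matches' → Γ ≠ [] → Δ ≠ [] →
      RAntimL I (Γ ++ E :: Δ) a (Γ.map (Rexp I a) ++ Δ)

/-- Refined Antimirov relation along a word (unbounded). -/
inductive RAntimW (I : α → α → Prop) :
    RegularExpression α → List α → List (RegularExpression α) → Prop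
  | nil (E : RegularExpression α) : RAntimW I E [] [E]
  | snoc {E : RegularExpression α} {u Γ a Γ'} :
      RAntimW I E u Γ → RAntimL I Γ a Γ' → RAntimW I E (u ++ [a]) Γ'

/-- N-bounded refined Antimirov relation lifted to nonempty lists of regexps. -/
inductive RAntimLN (I : α → α → Prop) (N : ℕ) :
    List (RegularExpression α) → α → List (RegularExpression α) → Prop
  | split {Γ Δ : List (RegularExpression α)} {E : RegularExpression α} {a El Er} :
      RAntim I E a El Er → Γ.length + Δ.length < N →
      RAntimLN I N (Γ ++ E :: Δ) a (Γ.map (Rexp I a) ++ El :: Er :: Δ)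
  | dropL {Γ Δ : List (RegularExpression α)} {E : RegularExpression α} {a El Er} :
      RAntim I E a El Er → [] ∈ El.matches' → Γ ≠ [] →
      RAntimLN I N (Γ ++ E :: Δ) a (Γ.map (Rexp I a) ++ Er :: Δ)
  | dropR {Γ Δ : List (RegularExpression α)} {E : RegularExpression α} {a El Er} :
      RAntim I E a El Er → [] ∈ Er.matches' → Δ ≠ [] →
      RAntimLN I N (Γ ++ E :: Δ) a (Γ.map (Rexp I a) ++ El :: Δ)
  | dropBoth {Γ Δ : List (RegularExpression α)} {E : RegularExpression α} {a El Er} :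
      RAntim I E a El Er → [] ∈ El.matches' → [] ∈ Er.matches' → Γ ≠ [] → Δ ≠ [] →
      RAntimLN I N (Γ ++ E :: Δ) a (Γ.map (Rexp I a) ++ Δ)

/-- N-bounded refined Antimirov relation along a word. -/
inductive RAntimWN (I : α → α → Prop) (N : ℕ) :
    RegularExpression α → List α → List (RegularExpression α) → Prop
  | nil (E : RegularExpression α) : RAntimWN I N E [] [E]
  | snoc {E : RegularExpression α} {u Γ a Γ'} :
      RAntimWN I N E u Γ → RAntimLN I N Γ a Γ' → RAntimWN I N E (u ++ [a]) Γ'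


/-!
A letter `a` can be moved to the front of a word `z` exactly when `z = z₀ a z₁` with `a I z₀`;
call `z₀ z₁` an `a`-extraction of `z`. Constructor by constructor, `⟦R_a E⟧` consists of the words
of `⟦E⟧` independent of `a`, and `⟦D_a E⟧` of the `a`-extractions of words of `⟦E⟧`: for products
and stars, the extracted letter lies in one factor and everything before it must be independent
of `a`. A Levi-type lemma, checked one swap at a time, shows that `a w ∼ z` iff some
`a`-extraction of `z` is trace equivalent to `w`. Hence `a w ∈ [L]` iff `w ∈ [D_a L]`, and the
theorem follows by induction on `u`; the second part is the case `v = ε`, as only `ε` is trace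
equivalent to `ε`.
-/

open Computability

namespace TrEq

variable {I : α → α → Prop}

theorem cons (a : α) {u v : List α} (h : TrEq I u v) : TrEq I (a :: u) (a :: v) := by
  induction h with
  | swap x y hI => exact swap (a :: x) y hI
  | refl u => exact refl _
  | symm _ ih => exact ih.symm
  | trans _ _ ih₁ ih₂ => exact ih₁.trans ih₂

theorem length_eq {u v : List α} (h : TrEq I u v) : u.length = v.length := by
  induction h with
  | swap x y hI => simp
  | refl u => rfl
  | symm _ ih => exact ih.symm
  | trans _ _ ih₁ ih₂ => exact ih₁.trans ih₂

end TrEq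

theorem nil_mem_trClosure_iff {I : α → α → Prop} {L : Language α} :
    [] ∈ TrClosure I L ↔ [] ∈ L := by
  refine ⟨fun ⟨z, hz, h⟩ => ?_, fun h => ⟨[], h, TrEq.refl _⟩⟩
  rwa [List.eq_nil_of_length_eq_zero h.length_eq.symm] at hz

section Extraction

variable {I : α → α → Prop} {a : α}

def Extracts (I : α → α → Prop) (a : α) (z r : List α) : Prop :=
  ∃ z₀ z₁, z = z₀ ++ a :: z₁ ∧ (∀ b ∈ z₀, I a b) ∧ r = z₀ ++ z₁

theorem not_extracts_nil {r : List α} : ¬Extracts I a [] r := by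
  rintro ⟨z₀, z₁, hz, -⟩
  simp at hz

theorem extracts_cons_iff {b : α} {w r : List α} :
    Extracts I a (b :: w) r ↔
      (a = b ∧ r = w) ∨ (I a b ∧ ∃ r', Extracts I a w r' ∧ r = b :: r') := by
  constructor
  · rintro ⟨_ | ⟨c, z₀⟩, z₁, hz, hind, rfl⟩ <;>
      simp only [List.nil_append, List.cons_append, List.cons.injEq] at hz
    · exact Or.inl ⟨hz.1.symm, by simp [hz.2]⟩
    · obtain ⟨rfl, rfl⟩ := hz
      have hind' : ∀ b ∈ z₀, I a b := fun b hb => hind b (List.mem_cons_of_mem _ hb)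
      exact Or.inr ⟨hind _ List.mem_cons_self, _, ⟨z₀, z₁, rfl, hind', rfl⟩, rfl⟩
  · rintro (⟨rfl, rfl⟩ | ⟨hab, r', ⟨z₀, z₁, rfl, hind, rfl⟩, rfl⟩)
    · exact ⟨[], _, rfl, by simp, rfl⟩
    · exact ⟨b :: z₀, z₁, rfl, by simpa [hab] using hind, rfl⟩

theorem extracts_append_iff {p q r : List α} :
    Extracts I a (p ++ q) r ↔ (∃ p', Extracts I a p p' ∧ r = p' ++ q) ∨
      ((∀ b ∈ p, I a b) ∧ ∃ q', Extracts I a q q' ∧ r = p ++ q') := by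
  induction p generalizing r with
  | nil => simp [not_extracts_nil]
  | cons b p ih =>
    simp only [List.cons_append, extracts_cons_iff, ih]
    grind

end Extraction

theorem Language.mem_singleton_iff {v w : List α} : v ∈ ({w} : Language α) ↔ v = w := Iff.rfl

section Languages

variable (I : α → α → Prop) (a : α)

def reorderablePart (L : Language α) : Language α :=
  {v | v ∈ L ∧ ∀ b ∈ v, I a b}

def reorderDeriv (L : Language α) : Language α :=
  {r | ∃ z ∈ L, Extracts I a z r}

variable {I a}

theorem mem_reorderablePart {L : Language α} {v : List α} :
    v ∈ reorderablePart I a L ↔ v ∈ L ∧ ∀ b ∈ v, I a b := Iff.rfl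

theorem mem_reorderDeriv {L : Language α} {r : List α} :
    r ∈ reorderDeriv I a L ↔ ∃ z ∈ L, Extracts I a z r := Iff.rfl

theorem reorderablePart_add (L M : Language α) :
    reorderablePart I a (L + M) = reorderablePart I a L + reorderablePart I a M := by
  ext v
  simp only [mem_reorderablePart, Language.mem_add, or_and_right]

theorem reorderDeriv_add (L M : Language α) :
    reorderDeriv I a (L + M) = reorderDeriv I a L + reorderDeriv I a M := by
  ext r
  simp only [mem_reorderDeriv, Language.mem_add, or_and_right, exists_or]

theorem reorderablePart_mul (L M : Language α) :
    reorderablePart I a (L * M) = reorderablePart I a L * reorderablePart I a M := by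
  ext v
  simp only [mem_reorderablePart, Language.mem_mul]
  constructor
  · rintro ⟨⟨p, hp, q, hq, rfl⟩, hind⟩
    exact ⟨p, ⟨hp, fun b hb => hind b (by simp [hb])⟩,
      q, ⟨hq, fun b hb => hind b (by simp [hb])⟩, rfl⟩
  · rintro ⟨p, ⟨hp, hpi⟩, q, ⟨hq, hqi⟩, rfl⟩
    exact ⟨⟨p, hp, q, hq, rfl⟩, by simpa [or_imp, forall_and] using And.intro hpi hqi⟩

theorem reorderablePart_kstar (L : Language α) :
    reorderablePart I a L∗ = (reorderablePart I a L)∗ := by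
  ext v
  simp only [mem_reorderablePart, Language.mem_kstar]
  constructor
  · rintro ⟨⟨Ls, rfl, hLs⟩, hind⟩
    exact ⟨Ls, rfl, fun y hy => ⟨hLs y hy, fun b hb => hind b (List.mem_flatten.2 ⟨y, hy, hb⟩)⟩⟩
  · rintro ⟨Ls, rfl, hLs⟩
    refine ⟨⟨Ls, rfl, fun y hy => (hLs y hy).1⟩, fun b hb => ?_⟩
    obtain ⟨y, hy, hb⟩ := List.mem_flatten.1 hb
    exact (hLs y hy).2 b hb

theorem reorderDeriv_mul (L M : Language α) :
    reorderDeriv I a (L * M) =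
      reorderDeriv I a L * M + reorderablePart I a L * reorderDeriv I a M := by
  ext r
  simp only [mem_reorderDeriv, Language.mem_add, Language.mem_mul, mem_reorderablePart]
  constructor
  · rintro ⟨_, ⟨p, hp, q, hq, rfl⟩, hr⟩
    rcases extracts_append_iff.1 hr with ⟨p', hp', rfl⟩ | ⟨hpi, q', hq', rfl⟩
    · exact Or.inl ⟨p', ⟨p, hp, hp'⟩, q, hq, rfl⟩
    · exact Or.inr ⟨p, ⟨hp, hpi⟩, q', ⟨q, hq, hq'⟩, rfl⟩
  · rintro (⟨p', ⟨p, hp, hp'⟩, q, hq, rfl⟩ | ⟨p, ⟨hp, hpi⟩, q', ⟨q, hq, hq'⟩, rfl⟩)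
    · exact ⟨p ++ q, ⟨p, hp, q, hq, rfl⟩, extracts_append_iff.2 (Or.inl ⟨p', hp', rfl⟩)⟩
    · exact ⟨p ++ q, ⟨p, hp, q, hq, rfl⟩, extracts_append_iff.2 (Or.inr ⟨hpi, q', hq', rfl⟩)⟩

theorem reorderDeriv_kstar (L : Language α) :
    reorderDeriv I a L∗ = (reorderablePart I a L)∗ * (reorderDeriv I a L * L∗) := by
  apply le_antisymm
  · rintro r ⟨_, ⟨Ls, rfl, hLs⟩, hr⟩
    induction Ls generalizing r with
    | nil => exact absurd hr not_extracts_nil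
    | cons x Ls ih =>
      rw [List.flatten_cons] at hr
      have hx := hLs x List.mem_cons_self
      have hLs' : ∀ y ∈ Ls, y ∈ L := fun y hy => hLs y (List.mem_cons_of_mem _ hy)
      rcases extracts_append_iff.1 hr with ⟨x', hx', rfl⟩ | ⟨hxi, q', hq', rfl⟩
      · exact ⟨[], Language.nil_mem_kstar _, _,
          Language.append_mem_mul ⟨x, hx, hx'⟩ (Language.join_mem_kstar hLs'), rfl⟩
      · obtain ⟨p, hp, s, hs, rfl⟩ := ih hLs' hq'
        have hxp : x ++ p ∈ (reorderablePart I a L)∗ :=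
          mul_kstar_le_kstar (a := reorderablePart I a L)
            (Language.append_mem_mul ⟨hx, hxi⟩ hp)
        exact ⟨x ++ p, hxp, s, hs, List.append_assoc _ _ _⟩
  · rintro _ ⟨p, hp, _, ⟨q', ⟨q, hq, hq'⟩, s, hs, rfl⟩, rfl⟩
    rw [← reorderablePart_kstar] at hp
    have hqs : q ++ s ∈ L∗ := mul_kstar_le_kstar (a := L) (Language.append_mem_mul hq hs)
    refine ⟨p ++ (q ++ s), kstar_mul_kstar L ▸ Language.append_mem_mul hp.1 hqs, ?_⟩
    exact extracts_append_iff.2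
      (Or.inr ⟨hp.2, _, extracts_append_iff.2 (Or.inl ⟨q', hq', rfl⟩), rfl⟩)

end Languages

section Semantics

variable {I : α → α → Prop} {a : α}

theorem matches'_rexp (E : RegularExpression α) :
    (Rexp I a E).matches' = reorderablePart I a E.matches' := by
  induction E with
  | zero => ext v; simp [Rexp, matches', mem_reorderablePart, Language.notMem_zero]
  | epsilon => ext v; simp [Rexp, matches', mem_reorderablePart, Language.mem_one]; grind
  | char b =>
    ext v
    by_cases hab : I a b <;>
      simp [Rexp, matches', mem_reorderablePart, hab, Language.notMem_zero,
        Language.mem_singleton_iff] <;>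
      rintro rfl <;> simpa using hab
  | plus E F ihE ihF => simp only [Rexp, matches', ihE, ihF, reorderablePart_add]
  | comp E F ihE ihF => simp only [Rexp, matches', ihE, ihF, reorderablePart_mul]
  | star E ihE => simp only [Rexp, matches', ihE, reorderablePart_kstar]

theorem matches'_dexp (E : RegularExpression α) :
    (Dexp I a E).matches' = reorderDeriv I a E.matches' := by
  induction E with
  | zero => ext v; simp [Dexp, matches', mem_reorderDeriv, Language.notMem_zero]
  | epsilon =>
    ext v
    simp [Dexp, matches', mem_reorderDeriv, Language.notMem_zero, Language.mem_one,
      not_extracts_nil]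
  | char b =>
    ext v
    by_cases hab : a = b <;>
      simp [Dexp, matches', mem_reorderDeriv, hab, Language.notMem_zero,
        Language.mem_singleton_iff, extracts_cons_iff, not_extracts_nil]
  | plus E F ihE ihF => simp only [Dexp, matches', ihE, ihF, reorderDeriv_add]
  | comp E F ihE ihF => simp only [Dexp, matches', ihE, ihF, matches'_rexp, reorderDeriv_mul]
  | star E ihE => simp only [Dexp, matches', ihE, matches'_rexp, reorderDeriv_kstar]

end Semantics

section Traces

variable {I : α → α → Prop} {a : α}

theorem Extracts.trEq_cons {z r : List α} (h : Extracts I a z r) : TrEq I (a :: r) z := by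
  obtain ⟨z₀, z₁, rfl, hind, rfl⟩ := h
  induction z₀ with
  | nil => exact TrEq.refl _
  | cons b z₀ ih =>
    have hswap : TrEq I (a :: b :: (z₀ ++ z₁)) (b :: a :: (z₀ ++ z₁)) :=
      TrEq.swap [] _ (hind b List.mem_cons_self)
    exact hswap.trans ((ih fun c hc => hind c (List.mem_cons_of_mem _ hc)).cons b)

theorem Extracts.exists_of_swap {x y r : List α} {c d : α} (hcd : I c d)
    (h : Extracts I a (x ++ [c, d] ++ y) r) :
    ∃ r', Extracts I a (x ++ [d, c] ++ y) r' ∧ TrEq I r r' := by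
  simp only [List.append_assoc, List.cons_append, List.nil_append] at h ⊢
  rcases extracts_append_iff.1 h with ⟨x', hx', rfl⟩ | ⟨hxi, q, hq, rfl⟩
  · exact ⟨x' ++ d :: c :: y, extracts_append_iff.2 (Or.inl ⟨x', hx', rfl⟩),
      by simpa using TrEq.swap x' y hcd⟩
  · rcases extracts_cons_iff.1 hq with ⟨rfl, rfl⟩ | ⟨hac, s, hs, rfl⟩
    · refine ⟨_, extracts_append_iff.2 (Or.inr ⟨hxi, _, ?_, rfl⟩), TrEq.refl _⟩
      exact extracts_cons_iff.2
        (Or.inr ⟨hcd, _, extracts_cons_iff.2 (Or.inl ⟨rfl, rfl⟩), rfl⟩)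
    rcases extracts_cons_iff.1 hs with ⟨rfl, rfl⟩ | ⟨had, t, ht, rfl⟩
    · refine ⟨_, extracts_append_iff.2 (Or.inr ⟨hxi, _, ?_, rfl⟩), TrEq.refl _⟩
      exact extracts_cons_iff.2 (Or.inl ⟨rfl, rfl⟩)
    · refine ⟨x ++ d :: c :: t, extracts_append_iff.2 (Or.inr ⟨hxi, _, ?_, rfl⟩), ?_⟩
      · exact extracts_cons_iff.2
          (Or.inr ⟨had, _, extracts_cons_iff.2 (Or.inr ⟨hac, t, ht, rfl⟩), rfl⟩)
      · simpa using TrEq.swap x t hcd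

theorem exists_extracts_of_trEq [Std.Symm I] {y z r : List α} (h : TrEq I y z)
    (hr : Extracts I a y r) : ∃ r', Extracts I a z r' ∧ TrEq I r r' := by
  suffices ∀ {y z : List α}, TrEq I y z →
      (∀ r, Extracts I a y r → ∃ r', Extracts I a z r' ∧ TrEq I r r') ∧
      (∀ r, Extracts I a z r → ∃ r', Extracts I a y r' ∧ TrEq I r r') from (this h).1 r hr
  intro y z h
  induction h with
  | swap x y hcd =>
    exact ⟨fun _ => Extracts.exists_of_swap hcd, fun _ => Extracts.exists_of_swap (symm hcd)⟩
  | refl u => exact ⟨fun r hr => ⟨r, hr, TrEq.refl r⟩, fun r hr => ⟨r, hr, TrEq.refl r⟩⟩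
  | symm _ ih => exact ih.symm
  | trans _ _ ih₁ ih₂ =>
    constructor
    · intro r hr
      obtain ⟨s, hs, hrs⟩ := ih₁.1 r hr
      obtain ⟨t, ht, hst⟩ := ih₂.1 s hs
      exact ⟨t, ht, hrs.trans hst⟩
    · intro r hr
      obtain ⟨s, hs, hrs⟩ := ih₂.2 r hr
      obtain ⟨t, ht, hst⟩ := ih₁.2 s hs
      exact ⟨t, ht, hrs.trans hst⟩

theorem cons_mem_trClosure_iff [Std.Symm I] {L : Language α} {w : List α} :
    a :: w ∈ TrClosure I L ↔ w ∈ TrClosure I (reorderDeriv I a L) := by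
  constructor
  · rintro ⟨z, hz, h⟩
    obtain ⟨r, hr, hwr⟩ := exists_extracts_of_trEq h ⟨[], w, rfl, by simp, rfl⟩
    exact ⟨r, ⟨z, hz, hr⟩, hwr⟩
  · rintro ⟨r, ⟨z, hz, hr⟩, hwr⟩
    exact ⟨z, hz, hwr.cons a |>.trans hr.trEq_cons⟩

theorem append_mem_trClosure_iff [Std.Symm I] (E : RegularExpression α) (u v : List α) :
    u ++ v ∈ TrClosure I E.matches' ↔ v ∈ TrClosure I (DexpW I u E).matches' := by
  induction u generalizing E with
  | nil => rfl
  | cons a u ih =>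
    rw [List.cons_append, cons_mem_trClosure_iff, ← matches'_dexp]
    exact ih (Dexp I a E)

end Traces

theorem stmt8_general {α : Type u} (I : α → α → Prop)
    (hsym : Symmetric I) (E : RegularExpression α) (u v : List α) :
    (u ++ v ∈ TrClosure I E.matches' ↔ v ∈ TrClosure I (DexpW I u E).matches') ∧
    (u ∈ TrClosure I E.matches' ↔ [] ∈ (DexpW I u E).matches') := by
  have : Std.Symm I := ⟨fun _ _ h => hsym h⟩
  refine ⟨append_mem_trClosure_iff E u v, ?_⟩
  simpa only [List.append_nil] using (append_mem_trClosure_iff E u []).trans nil_mem_trClosure_iff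

/-- u++v ∈ [⟦E⟧] iff v ∈ [⟦D_u E⟧]; in particular u ∈ [⟦E⟧] iff (D_u E)↓. -/
theorem stmt8 {α : Type u} [Fintype α] (I : α → α → Prop)
    (hirr : Irreflexive I) (hsym : Symmetric I) (E : RegularExpression α) (u v : List α) :
    (u ++ v ∈ TrClosure I E.matches' ↔ v ∈ TrClosure I (DexpW I u E).matches') ∧
    (u ∈ TrClosure I E.matches' ↔ [] ∈ (DexpW I u E).matches') :=
  stmt8_general I hsym E u v
end

section
/- The Antimirov reordering parts-of-derivatives collectively compute the semantic reordering derivative: for every regular expression E over Σ and every word u, D^I_u ⟦E⟧ = ⋃ {⟦E′⟧ | E →^{I*} (u, E′)}. -/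
open RegularExpression
open scoped Classical

universe u

variable {α : Type u}

/-!
The reordering derivative along `u ++ [a]` is the one-letter derivative `D_a` of the derivative
along `u`, where `D_a L` consists of the words `v₀ ++ v₁` with `v₀ ++ a :: v₁ ∈ L` and `v₀ I a`.
This rests on an inductive description of `u ⊲ z ⊳ v` (read `z` letter by letter, sending each
letter to `u` or to `v`, a letter sent to `v` being independent of what remains of `u`) and on the
fact that a letter commuting with everything after it can be traced through any trace
equivalence. By structural induction on `E`, using `⟦R_a E⟧ = {v ∈ ⟦E⟧ | v I a}`, the Antimirov
parts-of-derivatives along `a` compute `D_a ⟦E⟧`; induction on the word finishes the proof.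
-/

open scoped Computability

theorem List.append_eq_append_cons_iff {x y v₀ v₁ : List α} {a : α} :
    x ++ y = v₀ ++ a :: v₁ ↔
      (∃ w, x = v₀ ++ a :: w ∧ v₁ = w ++ y) ∨ (∃ w, v₀ = x ++ w ∧ y = w ++ a :: v₁) := by
  constructor
  · intro h
    rcases List.append_eq_append_iff.mp h with ⟨w, rfl, hy⟩ | ⟨_ | ⟨c, w⟩, hx, hw⟩
    · exact .inr ⟨w, rfl, hy⟩
    · exact .inr ⟨[], by simpa using hx.symm, by simpa using hw.symm⟩
    · obtain ⟨rfl, rfl⟩ := List.cons.inj hw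
      exact .inl ⟨w, hx, rfl⟩
  · rintro (⟨w, rfl, rfl⟩ | ⟨w, rfl, rfl⟩) <;> simp

theorem List.flatten_eq_append_cons_iff {ss : List (List α)} {v₀ v₁ : List α} {a : α} :
    ss.flatten = v₀ ++ a :: v₁ ↔ ∃ ss₁ x₀ x₁ ss₂, ss = ss₁ ++ (x₀ ++ a :: x₁) :: ss₂ ∧
      v₀ = ss₁.flatten ++ x₀ ∧ v₁ = x₁ ++ ss₂.flatten := by
  constructor
  · intro h
    rcases List.flatten_eq_append_iff.mp h with
      ⟨ss₁, ss₂, rfl, rfl, h₂⟩ | ⟨ss₁, x₀, c, x₁, ss₂, rfl, rfl, h₂⟩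
    · obtain ⟨es, x₁, ss₂, rfl, hes, rfl⟩ := List.flatten_eq_cons_iff.mp h₂.symm
      refine ⟨ss₁ ++ es, [], x₁, ss₂, by simp, ?_, rfl⟩
      simp [List.flatten_eq_nil_iff.mpr hes]
    · obtain ⟨rfl, rfl⟩ := List.cons.inj h₂
      exact ⟨ss₁, x₀, x₁, ss₂, rfl, rfl, rfl⟩
  · rintro ⟨ss₁, x₀, x₁, ss₂, rfl, rfl, rfl⟩
    simp

section TraceEquivalence

variable {I : α → α → Prop}

theorem TrEq.perm {u v : List α} (h : TrEq I u v) : u.Perm v := by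
  induction h with
  | swap x y _ => exact ((List.Perm.swap _ _ _).append_left x).append_right y
  | refl u => exact List.Perm.refl u
  | symm _ ih => exact ih.symm
  | trans _ _ ih₁ ih₂ => exact ih₁.trans ih₂

theorem TrEq.append_left {u v : List α} (w : List α) (h : TrEq I u v) :
    TrEq I (w ++ u) (w ++ v) := by
  induction h with
  | swap x y hab => simpa using TrEq.swap (I := I) (w ++ x) y hab
  | refl u => exact TrEq.refl _
  | symm _ ih => exact ih.symm
  | trans _ _ ih₁ ih₂ => exact ih₁.trans ih₂

theorem TrEq.append_right {u v : List α} (w : List α) (h : TrEq I u v) :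
    TrEq I (u ++ w) (v ++ w) := by
  induction h with
  | swap x y hab => simpa using TrEq.swap (I := I) x (y ++ w) hab
  | refl u => exact TrEq.refl _
  | symm _ ih => exact ih.symm
  | trans _ _ ih₁ ih₂ => exact ih₁.trans ih₂

theorem TrEq.cons_append_singleton {a : α} {u : List α} (h : ∀ b ∈ u, I a b) :
    TrEq I (a :: u) (u ++ [a]) := by
  induction u with
  | nil => exact TrEq.refl _
  | cons b u ih =>
    have hab : TrEq I (a :: b :: u) (b :: a :: u) := by
      simpa using TrEq.swap (I := I) [] u (h b (by simp))
    simpa using hab.trans ((ih fun c hc => h c (by simp [hc])).append_left [b])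

def Extractable (I : α → α → Prop) (a : α) (x x' : List α) : Prop :=
  ∀ p' q', x' = p' ++ a :: q' → (∀ b ∈ q', I a b) →
    ∃ p q, x = p ++ a :: q ∧ (∀ b ∈ q, I a b) ∧ TrEq I (p ++ q) (p' ++ q')

theorem extractable_swap {a c d : α} {s t : List α} (hcd : I c d) :
    Extractable I a (s ++ [c, d] ++ t) (s ++ [d, c] ++ t) := by
  intro p' q' heq hq'
  rw [List.append_assoc, List.cons_append, List.cons_append, List.nil_append] at heq
  rcases List.append_eq_append_iff.mp heq with ⟨m, rfl, hm⟩ | ⟨m, rfl, hm⟩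
  · rcases m with _ | ⟨x₁, _ | ⟨x₂, m⟩⟩ <;>
      simp only [List.nil_append, List.cons_append, List.cons.injEq] at hm
    · obtain ⟨rfl, rfl⟩ := hm
      exact ⟨s ++ [c], t, by simp, fun b hb => hq' b (by simp [hb]), by simpa using TrEq.refl _⟩
    · obtain ⟨rfl, rfl, rfl⟩ := hm
      refine ⟨s, d :: t, by simp, ?_, by simpa using TrEq.refl _⟩
      simpa [hcd] using hq'
    · obtain ⟨rfl, rfl, rfl⟩ := hm
      exact ⟨s ++ c :: d :: m, q', by simp, hq', by simpa using TrEq.swap (I := I) s (m ++ q') hcd⟩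
  · rcases m with _ | ⟨x₁, m⟩ <;>
      simp only [List.nil_append, List.cons_append, List.cons.injEq] at hm
    · obtain ⟨rfl, rfl⟩ := hm
      exact ⟨p' ++ [c], t, by simp, fun b hb => hq' b (by simp [hb]), by simpa using TrEq.refl _⟩
    · obtain ⟨rfl, rfl⟩ := hm
      refine ⟨p', m ++ c :: d :: t, by simp, ?_, by simpa using TrEq.swap (I := I) (p' ++ m) t hcd⟩
      intro b hb
      exact hq' b (by simp at hb ⊢; tauto)

/-- Proved in both directions at once because of `TrEq.symm`. -/
theorem TrEq.extractable {a : α} (hsym : Symmetric I) {x x' : List α} (h : TrEq I x x') :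
    Extractable I a x x' ∧ Extractable I a x' x := by
  induction h with
  | swap _ _ hcd => exact ⟨extractable_swap hcd, extractable_swap (hsym hcd)⟩
  | refl u => exact ⟨fun p' q' heq hq' => ⟨p', q', heq, hq', TrEq.refl _⟩,
      fun p' q' heq hq' => ⟨p', q', heq, hq', TrEq.refl _⟩⟩
  | symm _ ih => exact ih.symm
  | trans _ _ ih₁ ih₂ =>
    refine ⟨fun p' q' heq hq' => ?_, fun p' q' heq hq' => ?_⟩
    · obtain ⟨p₁, q₁, h₁, hq₁, ht₁⟩ := ih₂.1 p' q' heq hq'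
      obtain ⟨p₂, q₂, h₂, hq₂, ht₂⟩ := ih₁.1 p₁ q₁ h₁ hq₁
      exact ⟨p₂, q₂, h₂, hq₂, ht₂.trans ht₁⟩
    · obtain ⟨p₁, q₁, h₁, hq₁, ht₁⟩ := ih₁.2 p' q' heq hq'
      obtain ⟨p₂, q₂, h₂, hq₂, ht₂⟩ := ih₂.2 p₁ q₁ h₁ hq₁
      exact ⟨p₂, q₂, h₂, hq₂, ht₂.trans ht₁⟩

theorem TrEq.exists_of_append_singleton {a : α} (hsym : Symmetric I) {x u : List α}
    (h : TrEq I x (u ++ [a])) :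
    ∃ p q, x = p ++ a :: q ∧ (∀ b ∈ q, I a b) ∧ TrEq I (p ++ q) u := by
  simpa using (h.extractable (a := a) hsym).1 u [] (by simp) (by simp)

end TraceEquivalence

section Scattering

variable {I : α → α → Prop}

inductive Scatter (I : α → α → Prop) : List α → List α → List α → Prop
  | nil : Scatter I [] [] []
  | block {u z v : List α} (a : α) : Scatter I u z v → Scatter I (a :: u) (a :: z) v
  | res {u z v : List α} (a : α) : (∀ b ∈ u, I a b) → Scatter I u z v →
      Scatter I u (a :: z) (a :: v)

theorem Scatter.nil_left (z : List α) : Scatter I [] z z := by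
  induction z with
  | nil => exact .nil
  | cons a z ih => exact .res a (by simp) ih

theorem Scatter.eq_of_nil_left {z v : List α} (h : Scatter I [] z v) : z = v := by
  generalize hu : ([] : List α) = u at h
  induction h with
  | nil => rfl
  | block => simp at hu
  | res a _ _ ih => rw [ih hu]

theorem Scatter.append_block {u z v : List α} (w : List α) (h : Scatter I u z v) :
    Scatter I (w ++ u) (w ++ z) v := by
  induction w with
  | nil => exact h
  | cons a w ih => exact .block a ih

theorem Scatter.append_res {u z v : List α} (w : List α) (hw : WIndep I w u)
    (h : Scatter I u z v) : Scatter I u (w ++ z) (w ++ v) := by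
  induction w with
  | nil => exact h
  | cons a w ih =>
    exact .res a (hw a (by simp)) (ih fun c hc => hw c (List.mem_cons_of_mem a hc))

/-- `blocks f n = f 1 ++ ⋯ ++ f n`. -/
def blocks (f : ℕ → List α) (n : ℕ) : List α :=
  ((List.range n).map (fun i => f (i + 1))).flatten

@[simp]
theorem blocks_zero (f : ℕ → List α) : blocks f 0 = [] := rfl

theorem blocks_succ (f : ℕ → List α) (n : ℕ) :
    blocks f (n + 1) = f 1 ++ blocks (fun i => f (i + 1)) n := by
  simp only [blocks, List.range_succ_eq_map, List.map_cons, List.map_map, List.flatten_cons]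
  rfl

theorem blocks_congr {f g : ℕ → List α} {n : ℕ} (h : ∀ i, 1 ≤ i → i ≤ n → f i = g i) :
    blocks f n = blocks g n := by
  unfold blocks
  rw [List.map_congr_left fun i hi => h (i + 1) (by omega) (by simp at hi; omega)]

theorem blocks_succ_of_shift {f g : ℕ → List α} {n : ℕ} (h : ∀ i, 1 ≤ i → g (i + 1) = f i) :
    blocks g (n + 1) = g 1 ++ blocks f n := by
  rw [blocks_succ, blocks_congr fun i hi _ => h i hi]

theorem mem_blocks {f : ℕ → List α} {n : ℕ} {b : α} :
    b ∈ blocks f n ↔ ∃ i, 1 ≤ i ∧ i ≤ n ∧ b ∈ f i := by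
  simp only [blocks, List.mem_flatten, List.mem_map, List.mem_range]
  constructor
  · rintro ⟨_, ⟨i, hi, rfl⟩, hb⟩
    exact ⟨i + 1, by omega, by omega, hb⟩
  · rintro ⟨i, hi₁, hi₂, hb⟩
    exact ⟨f i, ⟨i - 1, by omega, by rw [Nat.sub_add_cancel hi₁]⟩, hb⟩

/-- The side conditions on the blocks `uᵢ = us i` and gaps `vⱼ = vs j` in the definition of
`ScatN I n`. -/
def ScatWitness (I : α → α → Prop) (n : ℕ) (us vs : ℕ → List α) : Prop :=
  (∀ i, 1 ≤ i → i ≤ n → us i ≠ []) ∧ (∀ j, 1 ≤ j → j ≤ n - 1 → vs j ≠ []) ∧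
    ∀ i j, 1 ≤ i → i ≤ n → j < i → WIndep I (vs j) (us i)

theorem scatN_iff {n : ℕ} {u z v : List α} :
    ScatN I n u z v ↔ ∃ us vs, ScatWitness I n us vs ∧
      u = blocks us n ∧ z = vs 0 ++ blocks (fun i => us i ++ vs i) n ∧ v = vs 0 ++ blocks vs n := by
  have hv (vs : ℕ → List α) : ((List.range (n + 1)).map vs).flatten = vs 0 ++ blocks vs n := by
    simp only [blocks, List.range_succ_eq_map, List.map_cons, List.map_map, List.flatten_cons]
    rfl
  simp only [ScatN, ScatWitness, hv]
  constructor
  · rintro ⟨us, vs, hus, hvs, hu, hv, hz, hind⟩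
    exact ⟨us, vs, ⟨hus, hvs, hind⟩, hu, hz, hv⟩
  · rintro ⟨us, vs, ⟨hus, hvs, hind⟩, hu, hz, hv⟩
    exact ⟨us, vs, hus, hvs, hu, hv, hz, hind⟩

theorem scatter_blocks {n : ℕ} {us vs : ℕ → List α}
    (h : ∀ i j, 1 ≤ i → i ≤ n → j < i → WIndep I (vs j) (us i)) :
    Scatter I (blocks us n) (vs 0 ++ blocks (fun i => us i ++ vs i) n) (vs 0 ++ blocks vs n) := by
  induction n generalizing us vs with
  | zero => exact .nil_left _
  | succ n ih =>
    have hrest := ih (us := fun i => us (i + 1)) (vs := fun j => vs (j + 1))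
      fun i j _ _ _ => h (i + 1) (j + 1) (by omega) (by omega) (by omega)
    have hv₀ : WIndep I (vs 0) (us 1 ++ blocks (fun i => us (i + 1)) n) := fun a ha b hb => by
      obtain ⟨i, hi₁, hi₂, hb⟩ := mem_blocks.mp (blocks_succ us n ▸ hb)
      exact h i 0 hi₁ hi₂ (by omega) a ha b hb
    simpa [blocks_succ] using (hrest.append_block (us 1)).append_res (vs 0) hv₀

theorem ScatN.scatter {n : ℕ} {u z v : List α} (h : ScatN I n u z v) : Scatter I u z v := by
  obtain ⟨us, vs, ⟨-, -, hind⟩, rfl, rfl, rfl⟩ := scatN_iff.mp h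
  exact scatter_blocks hind

theorem scatN_zero (z : List α) : ScatN I 0 [] z z :=
  scatN_iff.mpr ⟨fun _ => [], fun _ => z, ⟨by omega, by omega, by omega⟩, rfl, by simp, by simp⟩

theorem ScatN.cons_res {n : ℕ} {a : α} {u z v : List α} (ha : ∀ b ∈ u, I a b)
    (h : ScatN I n u z v) : ScatN I n u (a :: z) (a :: v) := by
  obtain ⟨us, vs, ⟨hus, hvs, hind⟩, rfl, rfl, rfl⟩ := scatN_iff.mp h
  let vs' j := if j = 0 then a :: vs 0 else vs j
  have hrest (g : ℕ → List α → List α) :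
      blocks (fun i => g i (vs' i)) n = blocks (fun i => g i (vs i)) n :=
    blocks_congr fun i hi _ => by simp [vs', Nat.pos_iff_ne_zero.mp hi]
  refine scatN_iff.mpr ⟨us, vs', ⟨hus, fun j hj₁ hj₂ => ?_, fun i j hi₁ hi₂ hj => ?_⟩, rfl, ?_, ?_⟩
  · simpa [vs', Nat.pos_iff_ne_zero.mp hj₁] using hvs j hj₁ hj₂
  · rcases Nat.eq_zero_or_pos j with rfl | hj₀
    · intro c hc b hb
      rcases List.mem_cons.mp hc with rfl | hc
      · exact ha b (mem_blocks.mpr ⟨i, hi₁, hi₂, hb⟩)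
      · exact hind i 0 hi₁ hi₂ hj c hc b hb
    · simpa [vs', hj₀.ne'] using hind i j hi₁ hi₂ hj
  · simpa [vs'] using (hrest fun i l => us i ++ l).symm
  · simpa [vs'] using (hrest fun _ l => l).symm

theorem ScatWitness.scatN_cons_first_block {m : ℕ} {a : α} {us vs : ℕ → List α}
    (h : ScatWitness I (m + 1) us vs) (hv₀ : vs 0 = []) :
    ScatN I (m + 1) (a :: blocks us (m + 1)) (a :: (vs 0 ++ blocks (fun i => us i ++ vs i) (m + 1)))
      (vs 0 ++ blocks vs (m + 1)) := by
  obtain ⟨hus, hvs, hind⟩ := h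
  let us' i := if i = 1 then a :: us 1 else us i
  have hshift (g : ℕ → List α → List α) :
      blocks (fun i => g i (us' i)) (m + 1) =
        g 1 (a :: us 1) ++ blocks (fun i => g (i + 1) (us (i + 1))) m :=
    blocks_succ_of_shift fun i hi => by simp [us', Nat.pos_iff_ne_zero.mp hi]
  refine scatN_iff.mpr ⟨us', vs, ⟨fun i hi₁ hi₂ => ?_, hvs, fun i j hi₁ hi₂ hj => ?_⟩, ?_, ?_, rfl⟩
  · by_cases hi : i = 1
    · simp [us', hi]
    · simpa [us', hi] using hus i hi₁ hi₂
  · by_cases hi : i = 1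
    · obtain rfl : j = 0 := by omega
      simp [WIndep, hv₀]
    · simpa [us', hi] using hind i j hi₁ hi₂ hj
  · simpa [blocks_succ] using (hshift fun _ l => l).symm
  · simpa [blocks_succ, hv₀] using (hshift fun i l => l ++ vs i).symm

theorem ScatWitness.scatN_cons_new_block {n : ℕ} {a : α} {us vs : ℕ → List α}
    (h : ScatWitness I n us vs) (hv₀ : 0 < n → vs 0 ≠ []) :
    ScatN I (n + 1) (a :: blocks us n) (a :: (vs 0 ++ blocks (fun i => us i ++ vs i) n))
      (vs 0 ++ blocks vs n) := by
  obtain ⟨hus, hvs, hind⟩ := h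
  let us' i := if i = 1 then [a] else us (i - 1)
  let vs' j := if j = 0 then [] else vs (j - 1)
  have hshift (g : ℕ → List α → List α → List α) :
      blocks (fun i => g i (us' i) (vs' i)) (n + 1) =
        g 1 [a] (vs 0) ++ blocks (fun i => g (i + 1) (us i) (vs i)) n :=
    blocks_succ_of_shift fun i hi => by simp [us', vs', Nat.pos_iff_ne_zero.mp hi]
  refine scatN_iff.mpr ⟨us', vs', ⟨fun i hi₁ hi₂ => ?_, fun j hj₁ hj₂ => ?_,
    fun i j hi₁ hi₂ hj => ?_⟩, ?_, ?_, ?_⟩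
  · by_cases hi : i = 1
    · simp [us', hi]
    · simpa [us', hi] using hus (i - 1) (by omega) (by omega)
  · by_cases hj : j = 1
    · simpa [vs', hj] using hv₀ (by omega)
    · simpa [vs', show j ≠ 0 by omega] using hvs (j - 1) (by omega) (by omega)
  · rcases Nat.eq_zero_or_pos j with rfl | hj₀
    · simp [WIndep, vs']
    · simpa [us', vs', hj₀.ne', show i ≠ 1 by omega] using
        hind (i - 1) (j - 1) (by omega) (by omega) (by omega)
  · simpa using (hshift fun _ u _ => u).symm
  · simpa [vs'] using (hshift fun _ u v => u ++ v).symm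
  · simpa [vs'] using (hshift fun _ _ v => v).symm

theorem ScatN.cons_block {n : ℕ} {a : α} {u z v : List α} (h : ScatN I n u z v) :
    ∃ m, ScatN I m (a :: u) (a :: z) v := by
  obtain ⟨us, vs, hw, rfl, rfl, rfl⟩ := scatN_iff.mp h
  -- `a` joins the first block exactly when that keeps the inner gaps nonempty.
  by_cases hmerge : 0 < n ∧ vs 0 = []
  · obtain ⟨m, rfl⟩ := Nat.exists_eq_add_one.mpr hmerge.1
    exact ⟨m + 1, hw.scatN_cons_first_block hmerge.2⟩
  · exact ⟨n + 1, hw.scatN_cons_new_block fun hn hv₀ => hmerge ⟨hn, hv₀⟩⟩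

theorem Scatter.scat {u z v : List α} (h : Scatter I u z v) : Scat I u z v := by
  induction h with
  | nil => exact ⟨0, scatN_zero []⟩
  | block a _ ih => exact ih.elim fun _ hn => hn.cons_block
  | res a ha _ ih => exact ih.elim fun n hn => ⟨n, hn.cons_res ha⟩

theorem scat_iff_scatter {u z v : List α} : Scat I u z v ↔ Scatter I u z v :=
  ⟨fun ⟨_, hn⟩ => hn.scatter, Scatter.scat⟩

theorem Scatter.insert {u z w : List α} (h : Scatter I u z w) {a : α} {v₀ v₁ : List α}
    (hw : w = v₀ ++ a :: v₁) (hv₀ : ∀ b ∈ v₀, I b a) :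
    ∃ u', TrEq I (u ++ [a]) u' ∧ Scatter I u' z (v₀ ++ v₁) := by
  induction h generalizing v₀ with
  | nil => simp at hw
  | block c _ ih =>
    obtain ⟨u', ht, hs⟩ := ih hw hv₀
    exact ⟨c :: u', by simpa using ht.append_left [c], hs.block c⟩
  | @res u z w c hc hs ih =>
    cases v₀ with
    | nil =>
      obtain ⟨rfl, rfl⟩ := List.cons.inj hw
      exact ⟨c :: u, (TrEq.cons_append_singleton hc).symm, hs.block c⟩
    | cons c' v₀ =>
      obtain ⟨rfl, rfl⟩ := List.cons.inj hw
      obtain ⟨u', ht, hs'⟩ := ih rfl fun b hb => hv₀ b (List.mem_cons_of_mem c hb)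
      refine ⟨u', ht, hs'.res c fun b hb => ?_⟩
      rcases List.mem_append.mp (ht.perm.symm.subset hb) with hb | hb
      · exact hc b hb
      · exact List.mem_singleton.mp hb ▸ hv₀ c (by simp)

theorem Scatter.remove {u z v : List α} (h : Scatter I u z v) {a : α} {p q : List α}
    (hu : u = p ++ a :: q) (hq : ∀ b ∈ q, I a b) :
    ∃ v₀ v₁, Scatter I (p ++ q) z (v₀ ++ a :: v₁) ∧ v = v₀ ++ v₁ ∧ ∀ b ∈ v₀, I b a := by
  induction h generalizing p with
  | nil => simp at hu
  | @block u z v c hs ih =>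
    cases p with
    | nil =>
      obtain ⟨rfl, rfl⟩ := List.cons.inj hu
      exact ⟨[], v, hs.res c hq, rfl, by simp⟩
    | cons c' p =>
      obtain ⟨rfl, rfl⟩ := List.cons.inj hu
      obtain ⟨v₀, v₁, hs', rfl, hv₀⟩ := ih rfl
      exact ⟨v₀, v₁, hs'.block c, rfl, hv₀⟩
  | res c hc _ ih =>
    subst hu
    obtain ⟨v₀, v₁, hs, rfl, hv₀⟩ := ih rfl
    refine ⟨c :: v₀, v₁, hs.res c fun b hb => hc b ?_, rfl, ?_⟩
    · simp only [List.mem_append, List.mem_cons] at hb ⊢; tauto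
    · simpa [hc a] using hv₀

theorem eqScat_append_singleton_iff (hsym : Symmetric I) {u z v : List α} {a : α} :
    EqScat I (u ++ [a]) z v ↔
      ∃ v₀ v₁, EqScat I u z (v₀ ++ a :: v₁) ∧ v = v₀ ++ v₁ ∧ ∀ b ∈ v₀, I b a := by
  simp only [EqScat, scat_iff_scatter]
  constructor
  · rintro ⟨w, ht, hs⟩
    obtain ⟨p, q, rfl, hq, ht'⟩ := ht.symm.exists_of_append_singleton hsym
    obtain ⟨v₀, v₁, hs', rfl, hv₀⟩ := hs.remove rfl hq
    exact ⟨v₀, v₁, ⟨p ++ q, ht'.symm, hs'⟩, rfl, hv₀⟩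
  · rintro ⟨v₀, v₁, ⟨u', ht, hs⟩, rfl, hv₀⟩
    obtain ⟨u'', ht', hs'⟩ := hs.insert rfl hv₀
    exact ⟨u'', (ht.append_right [a]).trans ht', hs'⟩

end Scattering

section ReorderingDerivative

variable {I : α → α → Prop}

theorem rderiv_nil (L : Language α) : RDeriv I [] L = L := by
  ext v
  constructor
  · rintro ⟨z, hz, u, ht, hs⟩
    obtain rfl : u = [] := ht.perm.symm.eq_nil
    rwa [← (scat_iff_scatter.mp hs).eq_of_nil_left]
  · exact fun hv => ⟨v, hv, [], TrEq.refl [], (Scatter.nil_left v).scat⟩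

theorem mem_rderiv_append_singleton (hsym : Symmetric I) {L : Language α} {u v : List α}
    {a : α} : v ∈ RDeriv I (u ++ [a]) L ↔
      ∃ v₀ v₁, v₀ ++ a :: v₁ ∈ RDeriv I u L ∧ v = v₀ ++ v₁ ∧ ∀ b ∈ v₀, I b a := by
  simp only [RDeriv, Set.mem_ofPred_eq, eqScat_append_singleton_iff hsym]
  constructor
  · rintro ⟨z, hz, v₀, v₁, hs, rfl, hv₀⟩
    exact ⟨v₀, v₁, ⟨z, hz, hs⟩, rfl, hv₀⟩
  · rintro ⟨v₀, v₁, ⟨z, hz, hs⟩, rfl, hv₀⟩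
    exact ⟨z, hz, v₀, v₁, hs, rfl, hv₀⟩

theorem mem_rderiv_singleton (hsym : Symmetric I) {L : Language α} {v : List α} {a : α} :
    v ∈ RDeriv I [a] L ↔ ∃ v₀ v₁, v₀ ++ a :: v₁ ∈ L ∧ v = v₀ ++ v₁ ∧ ∀ b ∈ v₀, I b a := by
  have h := mem_rderiv_append_singleton hsym (L := L) (u := []) (a := a) (v := v)
  rwa [rderiv_nil (I := I) L] at h

theorem mem_rderiv_append_singleton_of_eq (hsym : Symmetric I) {L : Language α} {u v : List α}
    {a : α} {P : RegularExpression α → Prop}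
    (h : RDeriv I u L = {w | ∃ E, P E ∧ w ∈ E.matches'}) :
    v ∈ RDeriv I (u ++ [a]) L ↔ ∃ E, P E ∧ v ∈ RDeriv I [a] E.matches' := by
  simp only [mem_rderiv_append_singleton hsym, h, mem_rderiv_singleton hsym, Set.mem_ofPred_eq]
  exact ⟨fun ⟨v₀, v₁, ⟨E, hE, hz⟩, hv, hv₀⟩ => ⟨E, hE, v₀, v₁, hz, hv, hv₀⟩,
    fun ⟨E, hE, v₀, v₁, hz, hv, hv₀⟩ => ⟨v₀, v₁, ⟨E, hE, hz⟩, hv, hv₀⟩⟩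

theorem mem_rderiv_singleton_add (hsym : Symmetric I) {L M : Language α} {a : α} {v : List α} :
    v ∈ RDeriv I [a] (L + M) ↔ v ∈ RDeriv I [a] L ∨ v ∈ RDeriv I [a] M := by
  simp only [mem_rderiv_singleton hsym, Language.mem_add]
  grind

theorem mem_rderiv_singleton_mul (hsym : Symmetric I) {L M : Language α} {a : α}
    {v : List α} : v ∈ RDeriv I [a] (L * M) ↔
      (∃ x ∈ RDeriv I [a] L, ∃ y ∈ M, x ++ y = v) ∨
      (∃ x ∈ L, (∀ b ∈ x, I b a) ∧ ∃ y ∈ RDeriv I [a] M, x ++ y = v) := by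
  simp only [mem_rderiv_singleton hsym, Language.mem_mul]
  constructor
  · rintro ⟨v₀, v₁, ⟨x, hx, y, hy, hxy⟩, rfl, hv₀⟩
    rcases List.append_eq_append_cons_iff.mp hxy with ⟨w, rfl, rfl⟩ | ⟨w, rfl, rfl⟩
    · exact .inl ⟨v₀ ++ w, ⟨v₀, w, hx, rfl, hv₀⟩, y, hy, by simp⟩
    · exact .inr ⟨x, hx, fun b hb => hv₀ b (by simp [hb]),
        w ++ v₁, ⟨w, v₁, hy, rfl, fun b hb => hv₀ b (by simp [hb])⟩, by simp⟩
  · rintro (⟨_, ⟨v₀, v₁, hx, rfl, hv₀⟩, y, hy, rfl⟩ | ⟨x, hx, hxa, _, ⟨v₀, v₁, hy, rfl, hv₀⟩, rfl⟩)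
    · exact ⟨v₀, v₁ ++ y, ⟨_, hx, y, hy, by simp⟩, by simp, hv₀⟩
    · refine ⟨x ++ v₀, v₁, ⟨x, hx, _, hy, by simp⟩, by simp, fun b hb => ?_⟩
      rcases List.mem_append.mp hb with hb | hb
      exacts [hxa b hb, hv₀ b hb]

theorem mem_rderiv_singleton_kstar (hsym : Symmetric I) {L : Language α} {a : α}
    {v : List α} : v ∈ RDeriv I [a] (L∗ : Language α) ↔
      ∃ s ∈ L∗, (∀ b ∈ s, I b a) ∧ ∃ x ∈ RDeriv I [a] L, ∃ t ∈ L∗, s ++ x ++ t = v := by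
  simp only [mem_rderiv_singleton hsym, Language.mem_kstar]
  constructor
  · rintro ⟨v₀, v₁, ⟨ss, hss, hL⟩, rfl, hv₀⟩
    obtain ⟨ss₁, x₀, x₁, ss₂, rfl, rfl, rfl⟩ := List.flatten_eq_append_cons_iff.mp hss.symm
    refine ⟨ss₁.flatten, ⟨ss₁, rfl, fun y hy => hL y (by simp [hy])⟩,
      fun b hb => hv₀ b (by simp [hb]), x₀ ++ x₁,
      ⟨x₀, x₁, hL _ (by simp), rfl, fun b hb => hv₀ b (by simp [hb])⟩,
      ss₂.flatten, ⟨ss₂, rfl, fun y hy => hL y (by simp [hy])⟩, by simp⟩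
  · rintro ⟨_, ⟨ss₁, rfl, hL₁⟩, hs, _, ⟨x₀, x₁, hx, rfl, hx₀⟩, _, ⟨ss₂, rfl, hL₂⟩, rfl⟩
    refine ⟨ss₁.flatten ++ x₀, x₁ ++ ss₂.flatten,
      ⟨ss₁ ++ (x₀ ++ a :: x₁) :: ss₂, by simp, fun y hy => ?_⟩, by simp, fun b hb => ?_⟩
    · simp only [List.mem_append, List.mem_cons] at hy
      rcases hy with hy | rfl | hy
      exacts [hL₁ y hy, hx, hL₂ y hy]
    · rcases List.mem_append.mp hb with hb | hb
      exacts [hs b hb, hx₀ b hb]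

end ReorderingDerivative

section RegularExpression

variable {I : α → α → Prop}

theorem mem_matches'_rexp (hsym : Symmetric I) {a : α} {E : RegularExpression α} {v : List α} :
    v ∈ (Rexp I a E).matches' ↔ v ∈ E.matches' ∧ ∀ b ∈ v, I b a := by
  induction E generalizing v with
  | zero => exact ⟨False.elim, fun h => h.1.elim⟩
  | epsilon =>
    simp only [Rexp, matches', Language.mem_one]
    exact ⟨fun h => ⟨h, by simp [h]⟩, And.left⟩
  | char b =>
    by_cases hab : I a b
    · simp only [Rexp, hab, if_true, matches']
      exact ⟨fun h => ⟨h, by simp [show v = [b] from h, hsym hab]⟩, And.left⟩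
    · simp only [Rexp, hab, if_false, matches']
      refine ⟨False.elim, fun ⟨h, hv⟩ => hab (hsym (hv b ?_))⟩
      simp [show v = [b] from h]
  | plus E F ihE ihF =>
    simp only [Rexp, matches', Language.mem_add, ihE, ihF]
    tauto
  | comp E F ihE ihF =>
    simp only [Rexp, matches', Language.mem_mul, ihE, ihF]
    constructor
    · rintro ⟨x, ⟨hx, hxa⟩, y, ⟨hy, hya⟩, rfl⟩
      refine ⟨⟨x, hx, y, hy, rfl⟩, fun b hb => ?_⟩
      rcases List.mem_append.mp hb with hb | hb
      exacts [hxa b hb, hya b hb]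
    · rintro ⟨⟨x, hx, y, hy, rfl⟩, hxy⟩
      exact ⟨x, ⟨hx, fun b hb => hxy b (by simp [hb])⟩,
        y, ⟨hy, fun b hb => hxy b (by simp [hb])⟩, rfl⟩
  | star E ih =>
    simp only [Rexp, matches', Language.mem_kstar, ih]
    constructor
    · rintro ⟨ss, rfl, hss⟩
      refine ⟨⟨ss, rfl, fun y hy => (hss y hy).1⟩, fun b hb => ?_⟩
      obtain ⟨y, hy, hb⟩ := List.mem_flatten.mp hb
      exact (hss y hy).2 b hb
    · rintro ⟨⟨ss, rfl, hss⟩, hv⟩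
      exact ⟨ss, rfl, fun y hy => ⟨hss y hy, fun b hb => hv b (List.mem_flatten.mpr ⟨y, hy, hb⟩)⟩⟩

theorem antim_plus_iff {a : α} {E F G : RegularExpression α} :
    Antim I (plus E F) a G ↔ Antim I E a G ∨ Antim I F a G := by
  constructor
  · intro h
    cases h with
    | plusL h => exact .inl h
    | plusR h => exact .inr h
  · rintro (h | h)
    exacts [.plusL h, .plusR h]

theorem antim_comp_iff {a : α} {E F G : RegularExpression α} :
    Antim I (comp E F) a G ↔
      (∃ E', Antim I E a E' ∧ comp E' F = G) ∨ ∃ F', Antim I F a F' ∧ comp (Rexp I a E) F' = G := by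
  constructor
  · intro h
    cases h with
    | compL h => exact .inl ⟨_, h, rfl⟩
    | compR h => exact .inr ⟨_, h, rfl⟩
  · rintro (⟨E', h, rfl⟩ | ⟨F', h, rfl⟩)
    exacts [.compL h, .compR h]

theorem antim_star_iff {a : α} {E G : RegularExpression α} :
    Antim I (star E) a G ↔
      ∃ E', Antim I E a E' ∧ comp (star (Rexp I a E)) (comp E' (star E)) = G := by
  constructor
  · intro h
    cases h with
    | st h => exact ⟨_, h, rfl⟩
  · rintro ⟨E', h, rfl⟩
    exact .st h

theorem exists_antim_iff_mem_rderiv (hsym : Symmetric I) {a : α} {E : RegularExpression α}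
    {v : List α} : (∃ E', Antim I E a E' ∧ v ∈ E'.matches') ↔ v ∈ RDeriv I [a] E.matches' := by
  induction E generalizing v with
  | zero =>
    rw [mem_rderiv_singleton hsym]
    exact ⟨fun ⟨_, h, _⟩ => (nomatch h), fun ⟨_, _, h, _⟩ => (Language.notMem_zero _ h).elim⟩
  | epsilon =>
    rw [mem_rderiv_singleton hsym]
    exact ⟨fun ⟨_, h, _⟩ => (nomatch h), fun ⟨_, _, h, _⟩ => by simp [matches'] at h⟩
  | char b =>
    rw [mem_rderiv_singleton hsym]
    constructor
    · rintro ⟨_, ⟨⟩, rfl⟩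
      exact ⟨[], [], rfl, rfl, by simp⟩
    · rintro ⟨v₀, v₁, h, rfl, -⟩
      have h : v₀ ++ a :: v₁ = [b] := h
      obtain ⟨rfl, rfl, rfl⟩ : v₀ = [] ∧ a = b ∧ v₁ = [] := by
        simpa [List.append_eq_singleton_iff] using h
      exact ⟨epsilon, .chr a, rfl⟩
  | plus E F ihE ihF =>
    simp only [antim_plus_iff, matches', mem_rderiv_singleton_add hsym, ← ihE, ← ihF, or_and_right,
      exists_or]
  | comp E F ihE ihF =>
    simp only [antim_comp_iff, or_and_right, exists_or, exists_exists_and_eq_and, matches',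
      Language.mem_mul, mem_matches'_rexp hsym, mem_rderiv_singleton_mul hsym]
    constructor
    · rintro (⟨E', hE', x, hx, y, hy, rfl⟩ | ⟨F', hF', x, ⟨hx, hxa⟩, y, hy, rfl⟩)
      · exact .inl ⟨x, ihE.mp ⟨E', hE', hx⟩, y, hy, rfl⟩
      · exact .inr ⟨x, hx, hxa, y, ihF.mp ⟨F', hF', hy⟩, rfl⟩
    · rintro (⟨x, hx, y, hy, rfl⟩ | ⟨x, hx, hxa, y, hy, rfl⟩)
      · obtain ⟨E', hE', hx⟩ := ihE.mpr hx
        exact .inl ⟨E', hE', x, hx, y, hy, rfl⟩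
      · obtain ⟨F', hF', hy⟩ := ihF.mpr hy
        exact .inr ⟨F', hF', x, ⟨hx, hxa⟩, y, hy, rfl⟩
  | star E ih =>
    have hR {s : List α} : s ∈ (Rexp I a E).matches'∗ ↔ s ∈ E.matches'∗ ∧ ∀ b ∈ s, I b a :=
      mem_matches'_rexp hsym (E := star E)
    simp only [antim_star_iff, exists_exists_and_eq_and]
    simp only [matches', Language.mem_mul]
    rw [mem_rderiv_singleton_kstar hsym]
    constructor
    · rintro ⟨E', hE', s, hs, _, ⟨x, hx, t, ht, rfl⟩, rfl⟩
      exact ⟨s, (hR.mp hs).1, (hR.mp hs).2, x, ih.mp ⟨E', hE', hx⟩, t, ht, by simp⟩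
    · rintro ⟨s, hs, hsa, x, hx, t, ht, rfl⟩
      obtain ⟨E', hE', hx⟩ := ih.mpr hx
      exact ⟨E', hE', s, hR.mpr ⟨hs, hsa⟩, x ++ t, ⟨x, hx, t, ht, rfl⟩, by simp⟩

theorem antimW_nil_iff {E E' : RegularExpression α} : AntimW I E [] E' ↔ E' = E := by
  constructor
  · intro h
    generalize hw : [] = w at h
    cases h with
    | nil => rfl
    | snoc => simp at hw
  · rintro rfl
    exact .nil _

theorem antimW_append_singleton_iff {E E'' : RegularExpression α} {u : List α} {a : α} :
    AntimW I E (u ++ [a]) E'' ↔ ∃ E', AntimW I E u E' ∧ Antim I E' a E'' := by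
  constructor
  · intro h
    generalize hw : u ++ [a] = w at h
    cases h with
    | nil => simp at hw
    | snoc h₁ h₂ =>
      obtain ⟨rfl, ha⟩ := List.append_inj' hw rfl
      obtain rfl := List.singleton_inj.mp ha
      exact ⟨_, h₁, h₂⟩
  · rintro ⟨E', h₁, h₂⟩
    exact h₁.snoc h₂

end RegularExpression

theorem stmt9_general {α : Type u} (I : α → α → Prop) (hsym : Symmetric I) (E : RegularExpression α)
    (u : List α) :
    RDeriv I u E.matches' = {v | ∃ E', AntimW I E u E' ∧ v ∈ E'.matches'} := by
  induction u using List.reverseRecOn with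
  | nil =>
    ext v
    simp only [rderiv_nil, Set.mem_ofPred_eq, antimW_nil_iff, exists_eq_left]
    rfl
  | append_singleton u a ih =>
    ext v
    rw [mem_rderiv_append_singleton_of_eq hsym ih]
    simp only [Set.mem_ofPred_eq, antimW_append_singleton_iff, ← exists_antim_iff_mem_rderiv hsym]
    exact ⟨fun ⟨E', hW, E'', hA, hv⟩ => ⟨E'', ⟨E', hW, hA⟩, hv⟩,
      fun ⟨E'', ⟨E', hW, hA⟩, hv⟩ => ⟨E', hW, E'', hA, hv⟩⟩

/-- D^I_u ⟦E⟧ = ⋃ {⟦E′⟧ | E →^{I*} (u, E′)}. -/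
theorem stmt9 {α : Type u} [Fintype α] (I : α → α → Prop)
    (hirr : Irreflexive I) (hsym : Symmetric I) (E : RegularExpression α) (u : List α) :
    RDeriv I u E.matches' = {v | ∃ E', AntimW I E u E' ∧ v ∈ E'.matches'} :=
  stmt9_general I hsym E u
end
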